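/- For every d ∈ ℕ, the correlated stochastic quantizers (Q1, Q2) with parameters c, r, ε, d at inputs w, w′ ∈ [c−r, c+r] satisfy P(Q1 = c − r·α(ε)) = 1 − q1 = 1/2 − (w−c)/(2r·α(ε)) and P(Q2 = c − r·α(ε)) = 1 − q2 = 1/2 − (w′−c)/(2r·α(ε)); consequently E[Q1] = w and E[Q2] = w′ (condition C4, unbiasedness). -/

import Mathlib

/-!
Write `x = 2^d q` and `t = ⌊x⌋`. Given `Z = z`, the quantizer takes its upper level with
probability `1` if `z < t`, `fract x` if `z = t` and `0` if `z > t`, that is with probability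
`max 0 (min 1 (x - z))`. These sum to `x` over `z < 2^d`, so averaging over the uniform `Z`
gives the upper level probability exactly `q`, and then
`q (c + rα) + (1 - q) (c - rα) = c + (2q - 1) rα = w`.
`Q2` is the same construction with the levels swapped and `q` replaced by `1 - q2`.
-/

open Real Set Finset

/-- `α(ε) = (e^ε + 1)/(e^ε − 1)`. -/
noncomputable def alphaFn (ε : ℝ) : ℝ := (Real.exp ε + 1) / (Real.exp ε - 1)

/-- `q(u) = 1/2 + (u − c)/(2rα(ε))`, the probability of the `+` level for input `u`. -/
noncomputable def qOf (c r ε u : ℝ) : ℝ := 1 / 2 + (u - c) / (2 * r * alphaFn ε)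

/-- `T1 = ⌊2^d · q1⌋`. -/
noncomputable def T1 (c r ε : ℝ) (d : ℕ) (w : ℝ) : ℤ := ⌊(2 : ℝ) ^ d * qOf c r ε w⌋

/-- `P(U = +1) = 2^d·q1 − ⌊2^d·q1⌋`. -/
noncomputable def pU1 (c r ε : ℝ) (d : ℕ) (w : ℝ) : ℝ :=
  (2 : ℝ) ^ d * qOf c r ε w - ⌊(2 : ℝ) ^ d * qOf c r ε w⌋

/-- `T2 = ⌊2^d · (1 − q2)⌋`. -/
noncomputable def T2 (c r ε : ℝ) (d : ℕ) (w' : ℝ) : ℤ := ⌊(2 : ℝ) ^ d * (1 - qOf c r ε w')⌋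

/-- `P(U' = +1) = 2^d·(1 − q2) − ⌊2^d·(1 − q2)⌋`. -/
noncomputable def pU2 (c r ε : ℝ) (d : ℕ) (w' : ℝ) : ℝ :=
  (2 : ℝ) ^ d * (1 - qOf c r ε w') - ⌊(2 : ℝ) ^ d * (1 - qOf c r ε w')⌋

/-- Value of the first correlated quantizer `Q1` on outcome `(z, u)`:
`c + rα` if `z < T1`, `c − rα` if `z > T1`, and `c + U·rα` if `z = T1`. -/
noncomputable def Q1val (c r ε : ℝ) (d : ℕ) (w : ℝ) (z : ℕ) (u : Bool) : ℝ :=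
  if (z : ℤ) < T1 c r ε d w then c + r * alphaFn ε
  else if T1 c r ε d w < (z : ℤ) then c - r * alphaFn ε
  else c + (if u then 1 else -1) * r * alphaFn ε

/-- Value of the second correlated quantizer `Q2` on outcome `(z, u')`:
`c − rα` if `z < T2`, `c + rα` if `z > T2`, and `c − U'·rα` if `z = T2`. -/
noncomputable def Q2val (c r ε : ℝ) (d : ℕ) (w' : ℝ) (z : ℕ) (u' : Bool) : ℝ :=
  if (z : ℤ) < T2 c r ε d w' then c - r * alphaFn ε
  else if T2 c r ε d w' < (z : ℤ) then c + r * alphaFn ε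
  else c - (if u' then 1 else -1) * r * alphaFn ε

/-- Joint pmf of the outcome `(Z, U, U')`: `Z` uniform on `{0, …, 2^d − 1}` and `Z, U, U'`
mutually independent (`u = true` encodes `U = +1`, `u' = true` encodes `U' = +1`). -/
noncomputable def μjoint (c r ε : ℝ) (d : ℕ) (w w' : ℝ) (z : ℕ) (u u' : Bool) : ℝ :=
  ((2 : ℝ) ^ d)⁻¹ * (if u then pU1 c r ε d w else 1 - pU1 c r ε d w) *
    (if u' then pU2 c r ε d w' else 1 - pU2 c r ε d w')

def thresholdQuantize {β : Type*} (t : ℤ) (a b : β) (z : ℕ) (u : Bool) : β :=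
  if (z : ℤ) < t then a else if t < (z : ℤ) then b else if u then a else b

theorem sum_range_max_zero_min_one_sub {x : ℝ} (hx : 0 ≤ x) (N : ℕ) :
    ∑ z ∈ range N, max 0 (min 1 (x - z)) = min x N := by
  induction N with
  | zero => simp [hx]
  | succ N ih =>
    rw [sum_range_succ, ih]
    push_cast
    simp only [min_def, max_def]
    split_ifs <;> linarith

theorem sum_bool_fract_mul_thresholdQuantize {β : Type*} (x : ℝ) (a b : β) (g : β → ℝ)
    (z : ℕ) :
    ∑ u : Bool, (if u then Int.fract x else 1 - Int.fract x) * g (thresholdQuantize ⌊x⌋ a b z u) =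
      g b + (g a - g b) * max 0 (min 1 (x - z)) := by
  simp only [Fintype.sum_bool, if_true, Bool.false_eq_true, if_false, thresholdQuantize]
  rcases lt_trichotomy (z : ℤ) ⌊x⌋ with h | h | h
  · have hzx : (z : ℝ) + 1 ≤ x := by exact_mod_cast Int.le_floor.mp (Int.add_one_le_iff.mpr h)
    rw [if_pos h, if_pos h, min_eq_left (by linarith), max_eq_right zero_le_one]
    ring
  · have hfract : x - z = Int.fract x := by
      rw [Int.fract, ← h]; push_cast; ring
    rw [if_neg h.not_lt, if_neg h.not_gt, if_neg h.not_lt, if_neg h.not_gt, hfract,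
      min_eq_right (Int.fract_lt_one x).le, max_eq_right (Int.fract_nonneg x)]
    ring
  · have hxz : x < z := by exact_mod_cast Int.floor_lt.mp h
    rw [if_neg (lt_asymm h), if_pos h, if_neg (lt_asymm h), if_pos h,
      max_eq_left ((min_le_right _ _).trans (by linarith))]
    ring

theorem sum_thresholdQuantize {β : Type*} {N : ℕ} (hN : 0 < N) {q : ℝ} (hq : q ∈ Set.Icc 0 1)
    (a b : β) (g : β → ℝ) :
    ∑ z ∈ range N, ∑ u : Bool,
        (N : ℝ)⁻¹ * (if u then Int.fract (N * q) else 1 - Int.fract (N * q)) *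
          g (thresholdQuantize ⌊N * q⌋ a b z u) = q * g a + (1 - q) * g b := by
  have hN' : (0 : ℝ) < N := by exact_mod_cast hN
  simp_rw [mul_assoc, ← mul_sum, sum_bool_fract_mul_thresholdQuantize, sum_add_distrib, ← mul_sum,
    sum_range_max_zero_min_one_sub (mul_nonneg hN'.le hq.1),
    min_eq_left (mul_le_of_le_one_right hN'.le hq.2), sum_const, card_range, nsmul_eq_mul]
  field_simp
  ring

theorem one_lt_alphaFn {ε : ℝ} (hε : 0 < ε) : 1 < alphaFn ε := by
  have he : 1 < Real.exp ε := Real.one_lt_exp_iff.mpr hε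
  rw [alphaFn, lt_div_iff₀ (by linarith)]
  linarith

theorem qOf_mem_Icc {c r ε u : ℝ} (hr : 0 < r) (hε : 0 < ε) (hu : u ∈ Set.Icc (c - r) (c + r)) :
    qOf c r ε u ∈ Set.Icc 0 1 := by
  have hα := one_lt_alphaFn hε
  have hden : 0 < 2 * r * alphaFn ε := by positivity
  have hbound : |(u - c) / (2 * r * alphaFn ε)| ≤ 1 / 2 := by
    rw [abs_div, abs_of_pos hden, div_le_iff₀ hden, abs_sub_le_iff]
    constructor <;> nlinarith [hu.1, hu.2]
  rw [abs_le] at hbound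
  constructor <;> unfold qOf <;> linarith [hbound.1, hbound.2]

theorem two_mul_qOf_sub_one_mul {c r ε u : ℝ} (hr : r ≠ 0) (hα : alphaFn ε ≠ 0) :
    (2 * qOf c r ε u - 1) * (r * alphaFn ε) = u - c := by
  unfold qOf
  field_simp
  ring

theorem Q1val_eq_thresholdQuantize (c r ε : ℝ) (d : ℕ) (w : ℝ) (z : ℕ) (u : Bool) :
    Q1val c r ε d w z u =
      thresholdQuantize (T1 c r ε d w) (c + r * alphaFn ε) (c - r * alphaFn ε) z u := by
  cases u <;> simp [Q1val, thresholdQuantize, sub_eq_add_neg]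

theorem Q2val_eq_thresholdQuantize (c r ε : ℝ) (d : ℕ) (w' : ℝ) (z : ℕ) (u' : Bool) :
    Q2val c r ε d w' z u' =
      thresholdQuantize (T2 c r ε d w') (c - r * alphaFn ε) (c + r * alphaFn ε) z u' := by
  cases u' <;> simp [Q2val, thresholdQuantize, sub_eq_add_neg]

theorem sum_Q1val {c r ε w : ℝ} (d : ℕ) (hq : qOf c r ε w ∈ Set.Icc 0 1) (g : ℝ → ℝ) :
    ∑ z ∈ range (2 ^ d), ∑ u : Bool,
        ((2 : ℝ) ^ d)⁻¹ * (if u then pU1 c r ε d w else 1 - pU1 c r ε d w) *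
          g (Q1val c r ε d w z u) =
      qOf c r ε w * g (c + r * alphaFn ε) + (1 - qOf c r ε w) * g (c - r * alphaFn ε) := by
  have h := sum_thresholdQuantize (N := 2 ^ d) (by positivity) hq (c + r * alphaFn ε)
    (c - r * alphaFn ε) g
  push_cast at h
  simp only [Q1val_eq_thresholdQuantize]
  exact h

theorem sum_Q2val {c r ε w' : ℝ} (d : ℕ) (hq : 1 - qOf c r ε w' ∈ Set.Icc 0 1) (g : ℝ → ℝ) :
    ∑ z ∈ range (2 ^ d), ∑ u' : Bool,
        ((2 : ℝ) ^ d)⁻¹ * (if u' then pU2 c r ε d w' else 1 - pU2 c r ε d w') *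
          g (Q2val c r ε d w' z u') =
      (1 - qOf c r ε w') * g (c - r * alphaFn ε) + qOf c r ε w' * g (c + r * alphaFn ε) := by
  have h := sum_thresholdQuantize (N := 2 ^ d) (by positivity) hq (c - r * alphaFn ε)
    (c + r * alphaFn ε) g
  push_cast at h
  rw [sub_sub_cancel] at h
  simp only [Q2val_eq_thresholdQuantize]
  exact h

/-- for every `d ∈ ℕ`, the correlated stochastic quantizers `(Q1, Q2)` satisfy
`P(Q1 = c − rα(ε)) = 1 − q1 = 1/2 − (w−c)/(2rα(ε))`,
`P(Q2 = c − rα(ε)) = 1 − q2 = 1/2 − (w'−c)/(2rα(ε))`, and consequently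
`E[Q1] = w` and `E[Q2] = w'` (condition C4, unbiasedness). -/
theorem stmt5 (c r ε : ℝ) (hr : 0 < r) (hε : 0 < ε) (d : ℕ)
    (w w' : ℝ) (hw : w ∈ Icc (c - r) (c + r)) (hw' : w' ∈ Icc (c - r) (c + r)) :
    (∑ z ∈ Finset.range (2 ^ d), ∑ u : Bool,
        ((2 : ℝ) ^ d)⁻¹ * (if u then pU1 c r ε d w else 1 - pU1 c r ε d w) *
          (if Q1val c r ε d w z u = c - r * alphaFn ε then 1 else 0)) = 1 - qOf c r ε w ∧
    1 - qOf c r ε w = 1 / 2 - (w - c) / (2 * r * alphaFn ε) ∧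
    (∑ z ∈ Finset.range (2 ^ d), ∑ u' : Bool,
        ((2 : ℝ) ^ d)⁻¹ * (if u' then pU2 c r ε d w' else 1 - pU2 c r ε d w') *
          (if Q2val c r ε d w' z u' = c - r * alphaFn ε then 1 else 0)) = 1 - qOf c r ε w' ∧
    1 - qOf c r ε w' = 1 / 2 - (w' - c) / (2 * r * alphaFn ε) ∧
    (∑ z ∈ Finset.range (2 ^ d), ∑ u : Bool,
        ((2 : ℝ) ^ d)⁻¹ * (if u then pU1 c r ε d w else 1 - pU1 c r ε d w) *
          Q1val c r ε d w z u) = w ∧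
    (∑ z ∈ Finset.range (2 ^ d), ∑ u' : Bool,
        ((2 : ℝ) ^ d)⁻¹ * (if u' then pU2 c r ε d w' else 1 - pU2 c r ε d w') *
          Q2val c r ε d w' z u') = w' := by
  have hα : 0 < alphaFn ε := zero_lt_one.trans (one_lt_alphaFn hε)
  have hlevels : c + r * alphaFn ε ≠ c - r * alphaFn ε := by
    have := mul_pos hr hα
    intro h; linarith
  have hq := qOf_mem_Icc hr hε hw
  have hq' : 1 - qOf c r ε w' ∈ Set.Icc 0 1 := by
    obtain ⟨h0, h1⟩ := qOf_mem_Icc hr hε hw'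
    constructor <;> linarith
  refine ⟨?_, by unfold qOf; ring, ?_, by unfold qOf; ring, ?_, ?_⟩
  · rw [sum_Q1val d hq (fun y => if y = c - r * alphaFn ε then 1 else 0)]
    simp [hlevels]
  · rw [sum_Q2val d hq' (fun y => if y = c - r * alphaFn ε then 1 else 0)]
    simp [hlevels]
  · rw [sum_Q1val d hq fun y => y]
    linear_combination two_mul_qOf_sub_one_mul (c := c) (u := w) hr.ne' hα.ne'
  · rw [sum_Q2val d hq' fun y => y]
    linear_combination two_mul_qOf_sub_one_mul (c := c) (u := w') hr.ne' hα.ne'
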